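/- arXiv:2306.13194 — 3 statements merged into one kernel-verified Lean document; each statement's English description precedes it below -/
import Mathlib

section
/- Under the stated IPG setting, a single preconditioner update contracts the preconditioner error up to a term proportional to the estimation error: for every k ≥ 0, ‖K̃_{k+1}‖ ≤ ρ_k ‖K̃_k‖ + γ η α_k ‖z_k‖. -/
open scoped Matrix.Norms.L2Operator RealInnerProductSpace

/-!
Subtracting the fixed-point relation `(H(ξ*) + βI) K* = I` from the update gives the exact
identity `K̃_{k+1} = (I - α_k (H(ξ_k) + βI)) K̃_k + α_k (H(ξ*) - H(ξ_k)) K*`; the triangle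
inequality, submultiplicativity of the operator norm and the Lipschitz bound on `H` then give the
estimate. The only analytic input is that `H(ξ*) + βI` is invertible, so that `K*` is a genuine
inverse: convexity makes `t ↦ ⟪g(x + t v), v⟫` monotone, hence `⟪H(x) v, v⟫ ≥ 0`, and then
`H(ξ*) + βI` is coercive.
-/

theorem hasDerivAt_const_add_smul {E : Type*} [NormedAddCommGroup E] [NormedSpace ℝ E]
    (x v : E) (t : ℝ) : HasDerivAt (fun s : ℝ => x + s • v) v t := by
  simpa using ((hasDerivAt_id t).smul_const v).const_add x

section Convex

variable {E : Type*} [NormedAddCommGroup E] [InnerProductSpace ℝ E] [CompleteSpace E]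
  {F : E → ℝ} {g : E → E}

theorem HasGradientAt.hasDerivAt_comp_add_smul {x v G : E} {t : ℝ}
    (h : HasGradientAt F G (x + t • v)) :
    HasDerivAt (fun s : ℝ => F (x + s • v)) ⟪G, v⟫ t := by
  simpa [Function.comp_def, InnerProductSpace.toDual_apply_apply] using
    h.hasFDerivAt.comp_hasDerivAt t (hasDerivAt_const_add_smul x v t)

theorem ConvexOn.monotone_inner_gradient_add_smul (hF : ConvexOn ℝ Set.univ F)
    (hgrad : ∀ ξ, HasGradientAt F (g ξ) ξ) (x v : E) :
    Monotone fun t : ℝ => ⟪g (x + t • v), v⟫ := by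
  have hline : ConvexOn ℝ Set.univ fun s : ℝ => F (x + s • v) := by
    simpa [Function.comp_def, AffineMap.lineMap_apply, add_comm] using
      hF.comp_affineMap (AffineMap.lineMap x (x + v) : ℝ →ᵃ[ℝ] E)
  have hderiv (t : ℝ) : HasDerivAt (fun s : ℝ => F (x + s • v)) ⟪g (x + t • v), v⟫ t :=
    (hgrad _).hasDerivAt_comp_add_smul
  intro s t hst
  simpa only [(hderiv _).deriv] using
    hline.monotoneOn_deriv (fun t _ => (hderiv t).differentiableAt) trivial trivial hst

theorem ConvexOn.inner_apply_self_nonneg_of_hasFDerivAt_gradient (hF : ConvexOn ℝ Set.univ F)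
    (hgrad : ∀ ξ, HasGradientAt F (g ξ) ξ) {x : E} {A : E →L[ℝ] E} (hA : HasFDerivAt g A x)
    (v : E) : 0 ≤ ⟪A v, v⟫ := by
  have hA' : HasFDerivAt g A (x + (0 : ℝ) • v) := by simpa using hA
  have hderiv : HasDerivAt (fun t : ℝ => ⟪g (x + t • v), v⟫) ⟪A v, v⟫ 0 := by
    simpa using (hA'.comp_hasDerivAt 0 (hasDerivAt_const_add_smul x v 0)).inner ℝ
      (hasDerivAt_const (0 : ℝ) v)
  simpa only [hderiv.deriv] using
    (hF.monotone_inner_gradient_add_smul hgrad x v).deriv_nonneg (x := 0)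

end Convex

theorem ContinuousLinearMap.isUnit_add_smul_one_of_inner_self_nonneg
    {E : Type*} [NormedAddCommGroup E] [InnerProductSpace ℝ E] [CompleteSpace E]
    {T : E →L[ℝ] E} (hT : ∀ v, 0 ≤ ⟪T v, v⟫) {β : ℝ} (hβ : 0 < β) :
    IsUnit (T + β • 1) := by
  refine (T + β • 1).isUnit_of_forall_le_norm_inner_map (c := β.toNNReal)
    (Real.toNNReal_pos.mpr hβ) fun v => ?_
  have h : ⟪(T + β • 1) v, v⟫ = ⟪T v, v⟫ + β * ‖v‖ ^ 2 := by
    simp [inner_add_left, real_inner_smul_left]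
  rw [h, Real.norm_of_nonneg (add_nonneg (hT v) (by positivity)), Real.coe_toNNReal _ hβ.le]
  linarith [hT v]

theorem Matrix.isUnit_add_smul_one_of_inner_self_nonneg {n : Type*} [Fintype n] [DecidableEq n]
    {A : Matrix n n ℝ} (hA : ∀ v, 0 ≤ ⟪Matrix.toEuclideanCLM (𝕜 := ℝ) A v, v⟫) {β : ℝ}
    (hβ : 0 < β) : IsUnit (A + β • 1) := by
  rw [← isUnit_map_iff (Matrix.toEuclideanCLM (n := n) (𝕜 := ℝ)), map_add, map_smul, map_one]
  exact ContinuousLinearMap.isUnit_add_smul_one_of_inner_self_nonneg hA hβ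

theorem sub_smul_mul_sub_one_sub_eq {𝕜 R : Type*} [CommRing 𝕜] [Ring R] [Algebra 𝕜 R]
    {a a' k k' : R} (c : 𝕜) (h : a' * k' = 1) :
    k - c • (a * k - 1) - k' = (1 - c • a) * (k - k') + c • ((a' - a) * k') := by
  rw [sub_mul, one_mul, sub_mul, smul_mul_assoc, mul_sub, h]
  simp only [smul_sub]
  abel

theorem ipg_preconditioner_single_step_bound_general
    {d : ℕ}
    (F : EuclideanSpace ℝ (Fin d) → ℝ)
    (g : EuclideanSpace ℝ (Fin d) → EuclideanSpace ℝ (Fin d))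
    (H : EuclideanSpace ℝ (Fin d) → Matrix (Fin d) (Fin d) ℝ)
    (hFconv : ConvexOn ℝ Set.univ F)
    (hgrad : ∀ ξ, HasGradientAt F (g ξ) ξ)
    (hHess : ∀ ξ, HasFDerivAt g (Matrix.toEuclideanCLM (𝕜 := ℝ) (H ξ)) ξ)
    (ξstar : EuclideanSpace ℝ (Fin d))
    (γ : ℝ)
    (hHlip : ∀ ξ₁ ξ₂, ‖H ξ₁ - H ξ₂‖ ≤ γ * ‖ξ₁ - ξ₂‖)
    (β : ℝ) (hβ : 0 < β)
    (Kstar : Matrix (Fin d) (Fin d) ℝ)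
    (hKstar : Kstar = (H ξstar + β • (1 : Matrix (Fin d) (Fin d) ℝ))⁻¹)
    (η : ℝ) (hη : η = ‖Kstar‖)
    (α : ℕ → ℝ) (hα : ∀ k, 0 < α k)
    (ξ : ℕ → EuclideanSpace ℝ (Fin d))
    (K : ℕ → Matrix (Fin d) (Fin d) ℝ)
    (hK : ∀ k, K (k + 1) =
      K k - α k • ((H (ξ k) + β • (1 : Matrix (Fin d) (Fin d) ℝ)) * K k - 1)) :
    ∀ k, ‖K (k + 1) - Kstar‖ ≤
      ‖(1 : Matrix (Fin d) (Fin d) ℝ)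
        - α k • (H (ξ k) + β • (1 : Matrix (Fin d) (Fin d) ℝ))‖ * ‖K k - Kstar‖
      + γ * η * α k * ‖ξ k - ξstar‖ := by
  intro k
  have hunit : IsUnit (H ξstar + β • 1) := Matrix.isUnit_add_smul_one_of_inner_self_nonneg
    (hFconv.inner_apply_self_nonneg_of_hasFDerivAt_gradient hgrad (hHess ξstar)) hβ
  have hinv : (H ξstar + β • 1) * Kstar = 1 :=
    hKstar ▸ Matrix.mul_nonsing_inv _ ((Matrix.isUnit_iff_isUnit_det _).mp hunit)
  rw [hK k, sub_smul_mul_sub_one_sub_eq (α k) hinv, add_sub_add_right_eq_sub]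
  set Ak := H (ξ k) + β • (1 : Matrix (Fin d) (Fin d) ℝ)
  calc _ ≤ ‖(1 - α k • Ak) * (K k - Kstar)‖ + ‖α k • ((H ξstar - H (ξ k)) * Kstar)‖ :=
        norm_add_le _ _
    _ ≤ ‖1 - α k • Ak‖ * ‖K k - Kstar‖ + α k * (‖H ξstar - H (ξ k)‖ * ‖Kstar‖) := by
      rw [norm_smul, Real.norm_of_nonneg (hα k).le]
      gcongr
      exacts [norm_mul_le _ _, (hα k).le, norm_mul_le _ _]
    _ ≤ ‖1 - α k • Ak‖ * ‖K k - Kstar‖ + α k * (γ * ‖ξ k - ξstar‖ * η) := by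
      rw [hη, norm_sub_rev (ξ k)]
      gcongr
      exacts [(hα k).le, hHlip _ _]
    _ = _ := by ring

theorem ipg_preconditioner_single_step_bound
    {d : ℕ}
    (F : EuclideanSpace ℝ (Fin d) → ℝ)
    (g : EuclideanSpace ℝ (Fin d) → EuclideanSpace ℝ (Fin d))
    (H : EuclideanSpace ℝ (Fin d) → Matrix (Fin d) (Fin d) ℝ)
    (hFconv : ConvexOn ℝ Set.univ F)
    (hgrad : ∀ ξ, HasGradientAt F (g ξ) ξ)
    (hHess : ∀ ξ, HasFDerivAt g (Matrix.toEuclideanCLM (𝕜 := ℝ) (H ξ)) ξ)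
    (hHcont : Continuous H)
    (ξstar : EuclideanSpace ℝ (Fin d))
    (hmin : ∀ ξ, F ξstar ≤ F ξ)
    (γ : ℝ) (hγ : 0 < γ)
    (hHlip : ∀ ξ₁ ξ₂, ‖H ξ₁ - H ξ₂‖ ≤ γ * ‖ξ₁ - ξ₂‖)
    (β : ℝ) (hβ : 0 < β)
    (Kstar : Matrix (Fin d) (Fin d) ℝ)
    (hKstar : Kstar = (H ξstar + β • (1 : Matrix (Fin d) (Fin d) ℝ))⁻¹)
    (η : ℝ) (hη : η = ‖Kstar‖)
    (δ : ℝ) (hδ : 0 < δ)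
    (α : ℕ → ℝ) (hα : ∀ k, 0 < α k)
    (ξ : ℕ → EuclideanSpace ℝ (Fin d))
    (K : ℕ → Matrix (Fin d) (Fin d) ℝ)
    (hξ : ∀ k, ξ (k + 1) = ξ k - δ • (Matrix.toEuclideanCLM (𝕜 := ℝ) (K k)) (g (ξ k)))
    (hK : ∀ k, K (k + 1) =
      K k - α k • ((H (ξ k) + β • (1 : Matrix (Fin d) (Fin d) ℝ)) * K k - 1)) :
    ∀ k, ‖K (k + 1) - Kstar‖ ≤
      ‖(1 : Matrix (Fin d) (Fin d) ℝ)
        - α k • (H (ξ k) + β • (1 : Matrix (Fin d) (Fin d) ℝ))‖ * ‖K k - Kstar‖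
      + γ * η * α k * ‖ξ k - ξstar‖ :=
  ipg_preconditioner_single_step_bound_general F g H hFconv hgrad hHess ξstar γ hHlip β hβ Kstar
    hKstar η hη α hα ξ K hK
end

section
/- Under the stated setting, for any ξ ∈ ℝ^d and K ∈ ℝ^{d×d}, the point ξ′ = ξ − δ K g(ξ) satisfies ‖ξ′ − ξ*‖ ≤ (δηγ/2)‖ξ − ξ*‖² + ηq|1 − δ|·‖ξ − ξ*‖ + ηβ‖ξ − ξ*‖ + δl‖K − K*‖·‖ξ − ξ*‖. -/
/-!
Put `v = ξ - ξ*` and `M = H ξ* + β I`. Since `g ξ* = 0`, the remainder `R = g ξ - H ξ* v` of the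
first-order Taylor expansion of `g` at `ξ*` has norm at most `γ ‖v‖² / 2`, as `H` is
`γ`-Lipschitz. Convexity of `F` makes `H ξ*` positive semidefinite, so `M` is invertible and
`K* M = I`; hence
`ξ' - ξ* = K* ((1 - δ) H ξ* v + β v - δ R) - δ (K - K*) g ξ`,
and the four terms of the bound are the norms of the four pieces.
-/

open scoped Matrix.Norms.L2Operator

open Set InnerProductSpace

section Taylor

variable {E F : Type*} [NormedAddCommGroup E] [NormedSpace ℝ E]
  [NormedAddCommGroup F] [NormedSpace ℝ F]

theorem norm_sub_sub_fderiv_apply_le_of_norm_fderiv_sub_le {f : E → F} {f' : E → E →L[ℝ] F}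
    {γ : ℝ} {x : E} (hf : ∀ y, HasFDerivAt f (f' y) y)
    (hf' : ∀ y, ‖f' y - f' x‖ ≤ γ * ‖y - x‖) (y : E) :
    ‖f y - f x - f' x (y - x)‖ ≤ γ / 2 * ‖y - x‖ ^ 2 := by
  set u := y - x
  have hline : ∀ t : ℝ, HasDerivAt (fun s : ℝ => x + s • u) u t := fun t => by
    simpa using ((hasDerivAt_id t).smul_const u).const_add x
  have hφ : ∀ t : ℝ, HasDerivAt (fun s : ℝ => f (x + s • u) - f x - s • f' x u)
      (f' (x + t • u) u - f' x u) t := fun t =>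
    (((hf _).comp_hasDerivAt t (hline t)).sub_const (f x)).sub
      (by simpa using (hasDerivAt_id t).smul_const (f' x u))
  have hB : ∀ t : ℝ, HasDerivAt (fun s : ℝ => γ / 2 * ‖u‖ ^ 2 * s ^ 2) (γ * ‖u‖ ^ 2 * t) t :=
    fun t => ((hasDerivAt_pow 2 t).const_mul _).congr_deriv (by norm_num; ring)
  have hbound : ∀ t ∈ Ico (0 : ℝ) 1, ‖f' (x + t • u) u - f' x u‖ ≤ γ * ‖u‖ ^ 2 * t := by
    intro t ht
    calc ‖f' (x + t • u) u - f' x u‖ = ‖(f' (x + t • u) - f' x) u‖ := rfl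
      _ ≤ ‖f' (x + t • u) - f' x‖ * ‖u‖ := (f' (x + t • u) - f' x).le_opNorm u
      _ ≤ γ * ‖t • u‖ * ‖u‖ := by gcongr; simpa using hf' (x + t • u)
      _ = γ * ‖u‖ ^ 2 * t := by
        rw [norm_smul, Real.norm_of_nonneg ht.1]; ring
  have := image_norm_le_of_norm_deriv_right_le_deriv_boundary
    (fun t _ => (hφ t).continuousAt.continuousWithinAt) (fun t _ => (hφ t).hasDerivWithinAt)
    (by simp) hB hbound (right_mem_Icc.2 zero_le_one)
  simpa [u] using this

end Taylor

section Gradient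

variable {E : Type*} [NormedAddCommGroup E] [InnerProductSpace ℝ E] [CompleteSpace E]
  {F : E → ℝ} {g : E → E}

theorem IsLocalMin.hasGradientAt_eq_zero {x : E} {g₀ : E} (hmin : IsLocalMin F x)
    (hF : HasGradientAt F g₀ x) : g₀ = 0 := by
  simpa using congrArg (toDual ℝ E).symm (hmin.hasFDerivAt_eq_zero hF.hasFDerivAt)

theorem ConvexOn.inner_fderiv_gradient_apply_self_nonneg (hF : ConvexOn ℝ univ F)
    (hg : ∀ x, HasGradientAt F (g x) x) {x : E} {g' : E →L[ℝ] E} (hg' : HasFDerivAt g g' x)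
    (w : E) : 0 ≤ ⟪g' w, w⟫_ℝ := by
  have hline : ∀ t : ℝ, HasDerivAt (fun s : ℝ => x + s • w) w t := fun t => by
    simpa using ((hasDerivAt_id t).smul_const w).const_add x
  set φ : ℝ → ℝ := fun t => F (x + t • w)
  have hφ : ∀ t, HasDerivAt φ ⟪g (x + t • w), w⟫_ℝ t := fun t => by
    simpa [φ, Function.comp_def, real_inner_comm] using
      (hg _).hasFDerivAt.comp_hasDerivAt t (hline t)
  have hφconv : ConvexOn ℝ univ φ := by
    simpa [φ, Function.comp_def, AffineMap.lineMap_apply, add_comm] using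
      hF.comp_affineMap (AffineMap.lineMap x (x + w))
  have hderiv : deriv φ = fun t => ⟪g (x + t • w), w⟫_ℝ := funext fun t => (hφ t).deriv
  have hmono : Monotone (deriv φ) := by
    simpa [monotoneOn_univ] using hφconv.monotoneOn_deriv fun t _ => (hφ t).differentiableAt
  have hφ' : HasDerivAt (deriv φ) ⟪g' w, w⟫_ℝ 0 := by
    rw [hderiv]
    simpa using ((hg'.comp_hasDerivAt_of_eq 0 (hline 0) (by simp)).inner ℝ (hasDerivAt_const 0 w))
  exact hφ'.deriv ▸ hmono.deriv_nonneg

end Gradient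

theorem Matrix.isUnit_add_smul_one_of_inner_nonneg {n : Type*} [Fintype n] [DecidableEq n]
    (A : Matrix n n ℝ) (hA : ∀ w, 0 ≤ ⟪Matrix.toEuclideanCLM (𝕜 := ℝ) A w, w⟫_ℝ)
    {β : ℝ} (hβ : 0 < β) : IsUnit (A + β • 1) := by
  rw [← Matrix.mulVec_injective_iff_isUnit, ← Matrix.coe_mulVecLin, injective_iff_map_eq_zero]
  intro v hv
  set w : EuclideanSpace ℝ n := WithLp.toLp 2 v
  have hw : Matrix.toEuclideanCLM (𝕜 := ℝ) A w + β • w = 0 := by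
    simpa [w, Matrix.add_mulVec] using congrArg (WithLp.toLp 2) hv
  have hquad : ⟪Matrix.toEuclideanCLM (𝕜 := ℝ) A w, w⟫_ℝ + β * ‖w‖ ^ 2 = 0 := by
    simpa [inner_add_left, real_inner_smul_left, real_inner_self_eq_norm_sq] using
      congrArg (⟪·, w⟫_ℝ) hw
  have : ‖w‖ ^ 2 = 0 := by nlinarith [hA w, sq_nonneg ‖w‖]
  simpa [w] using this

section Step

variable {E : Type*} [NormedAddCommGroup E] [NormedSpace ℝ E]

theorem norm_sub_smul_apply_le_of_mul_add_smul_one_eq_one {A K₀ K : E →L[ℝ] E} {β δ : ℝ}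
    (hβ : 0 ≤ β) (hδ : 0 ≤ δ) (hK₀ : K₀ * (A + β • 1) = 1) (v w : E) :
    ‖v - δ • K w‖ ≤ ‖K₀‖ * (|1 - δ| * ‖A‖ * ‖v‖ + β * ‖v‖ + δ * ‖w - A v‖)
      + δ * ‖K - K₀‖ * ‖w‖ := by
  have hv : K₀ (A v + β • v) = v := by simpa using congrArg (· v) hK₀
  have hsplit : v - δ • K w = K₀ ((1 - δ) • A v + β • v - δ • (w - A v)) - δ • (K - K₀) w := by
    have : (1 - δ) • A v + β • v - δ • (w - A v) = (A v + β • v) - δ • w := by module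
    rw [this, map_sub, hv, map_smul, sub_apply]
    module
  have hinner : ‖(1 - δ) • A v + β • v - δ • (w - A v)‖
      ≤ |1 - δ| * ‖A‖ * ‖v‖ + β * ‖v‖ + δ * ‖w - A v‖ := by
    refine (norm_sub_le _ _).trans (add_le_add ((norm_add_le _ _).trans (add_le_add ?_ ?_)) ?_)
    · rw [norm_smul, Real.norm_eq_abs, mul_assoc]
      exact mul_le_mul_of_nonneg_left (A.le_opNorm v) (abs_nonneg _)
    · rw [norm_smul, Real.norm_of_nonneg hβ]
    · rw [norm_smul, Real.norm_of_nonneg hδ]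
  calc ‖v - δ • K w‖
      ≤ ‖K₀ ((1 - δ) • A v + β • v - δ • (w - A v))‖ + ‖δ • (K - K₀) w‖ := by
        rw [hsplit]; exact norm_sub_le _ _
    _ ≤ ‖K₀‖ * ‖(1 - δ) • A v + β • v - δ • (w - A v)‖ + δ * (‖K - K₀‖ * ‖w‖) := by
        rw [norm_smul, Real.norm_of_nonneg hδ]
        gcongr
        · exact K₀.le_opNorm _
        · exact (K - K₀).le_opNorm w
    _ ≤ _ := by rw [← mul_assoc]; gcongr

end Step

theorem ipg_one_update_error_bound_general
    {d : ℕ}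
    (F : EuclideanSpace ℝ (Fin d) → ℝ)
    (g : EuclideanSpace ℝ (Fin d) → EuclideanSpace ℝ (Fin d))
    (H : EuclideanSpace ℝ (Fin d) → Matrix (Fin d) (Fin d) ℝ)
    (hFconv : ConvexOn ℝ Set.univ F)
    (hgrad : ∀ ξ, HasGradientAt F (g ξ) ξ)
    (hHess : ∀ ξ, HasFDerivAt g (Matrix.toEuclideanCLM (𝕜 := ℝ) (H ξ)) ξ)
    (ξstar : EuclideanSpace ℝ (Fin d))
    (hmin : ∀ ξ, F ξstar ≤ F ξ)
    (γ : ℝ)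
    (hHlip : ∀ ξ₁ ξ₂, ‖H ξ₁ - H ξ₂‖ ≤ γ * ‖ξ₁ - ξ₂‖)
    (q : ℝ) (hHq : ‖H ξstar‖ ≤ q)
    (l : ℝ)
    (hglip : ∀ ξ₁ ξ₂, ‖g ξ₁ - g ξ₂‖ ≤ l * ‖ξ₁ - ξ₂‖)
    (β : ℝ) (hβ : 0 < β) (δ : ℝ) (hδ : 0 < δ)
    (Kstar : Matrix (Fin d) (Fin d) ℝ)
    (hKstar : Kstar = (H ξstar + β • (1 : Matrix (Fin d) (Fin d) ℝ))⁻¹)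
    (η : ℝ) (hη : η = ‖Kstar‖) :
    ∀ (ξ : EuclideanSpace ℝ (Fin d)) (K : Matrix (Fin d) (Fin d) ℝ),
      ‖(ξ - δ • (Matrix.toEuclideanCLM (𝕜 := ℝ) K) (g ξ)) - ξstar‖
        ≤ δ * η * γ / 2 * ‖ξ - ξstar‖ ^ 2 + η * q * |1 - δ| * ‖ξ - ξstar‖
          + η * β * ‖ξ - ξstar‖ + δ * l * ‖K - Kstar‖ * ‖ξ - ξstar‖ := by
  intro ξ K
  set T := Matrix.toEuclideanCLM (n := Fin d) (𝕜 := ℝ)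
  have hg0 : g ξstar = 0 :=
    IsLocalMin.hasGradientAt_eq_zero (Filter.Eventually.of_forall hmin) (hgrad ξstar)
  have hunit : IsUnit (H ξstar + β • 1) :=
    (H ξstar).isUnit_add_smul_one_of_inner_nonneg
      (hFconv.inner_fderiv_gradient_apply_self_nonneg hgrad (hHess ξstar)) hβ
  have hinv : T Kstar * (T (H ξstar) + β • 1) = 1 := by
    rw [hKstar, ← map_one T, ← map_smul, ← map_add, ← map_mul,
      Matrix.nonsing_inv_mul _ ((Matrix.isUnit_iff_isUnit_det _).mp hunit)]
  have hTaylor : ‖g ξ - T (H ξstar) (ξ - ξstar)‖ ≤ γ / 2 * ‖ξ - ξstar‖ ^ 2 := by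
    have := norm_sub_sub_fderiv_apply_le_of_norm_fderiv_sub_le (f' := fun y => T (H y)) hHess
      (fun y => by rw [← map_sub, Matrix.l2_opNorm_toEuclideanCLM]; exact hHlip y ξstar) ξ
    rwa [hg0, sub_zero] at this
  have hgξ : ‖g ξ‖ ≤ l * ‖ξ - ξstar‖ := by simpa only [hg0, sub_zero] using hglip ξ ξstar
  calc ‖(ξ - δ • T K (g ξ)) - ξstar‖ = ‖(ξ - ξstar) - δ • T K (g ξ)‖ := by rw [sub_right_comm]
    _ ≤ ‖T Kstar‖ * (|1 - δ| * ‖T (H ξstar)‖ * ‖ξ - ξstar‖ + β * ‖ξ - ξstar‖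
          + δ * ‖g ξ - T (H ξstar) (ξ - ξstar)‖) + δ * ‖T K - T Kstar‖ * ‖g ξ‖ :=
        norm_sub_smul_apply_le_of_mul_add_smul_one_eq_one hβ.le hδ.le hinv _ _
    _ ≤ η * (|1 - δ| * q * ‖ξ - ξstar‖ + β * ‖ξ - ξstar‖ + δ * (γ / 2 * ‖ξ - ξstar‖ ^ 2))
          + δ * ‖K - Kstar‖ * (l * ‖ξ - ξstar‖) := by
        rw [← map_sub, Matrix.l2_opNorm_toEuclideanCLM, Matrix.l2_opNorm_toEuclideanCLM,
          Matrix.l2_opNorm_toEuclideanCLM, ← hη]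
        have hη₀ : 0 ≤ η := hη ▸ norm_nonneg Kstar
        gcongr
    _ = _ := by ring

theorem ipg_one_update_error_bound
    {d : ℕ}
    (F : EuclideanSpace ℝ (Fin d) → ℝ)
    (g : EuclideanSpace ℝ (Fin d) → EuclideanSpace ℝ (Fin d))
    (H : EuclideanSpace ℝ (Fin d) → Matrix (Fin d) (Fin d) ℝ)
    (hFconv : ConvexOn ℝ Set.univ F)
    (hgrad : ∀ ξ, HasGradientAt F (g ξ) ξ)
    (hHess : ∀ ξ, HasFDerivAt g (Matrix.toEuclideanCLM (𝕜 := ℝ) (H ξ)) ξ)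
    (hHcont : Continuous H)
    (ξstar : EuclideanSpace ℝ (Fin d))
    (hmin : ∀ ξ, F ξstar ≤ F ξ)
    (γ : ℝ) (hγ : 0 < γ)
    (hHlip : ∀ ξ₁ ξ₂, ‖H ξ₁ - H ξ₂‖ ≤ γ * ‖ξ₁ - ξ₂‖)
    (q : ℝ) (hq : 0 < q) (hHq : ‖H ξstar‖ ≤ q)
    (l : ℝ) (hl : 0 < l)
    (hglip : ∀ ξ₁ ξ₂, ‖g ξ₁ - g ξ₂‖ ≤ l * ‖ξ₁ - ξ₂‖)
    (β : ℝ) (hβ : 0 < β) (δ : ℝ) (hδ : 0 < δ)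
    (Kstar : Matrix (Fin d) (Fin d) ℝ)
    (hKstar : Kstar = (H ξstar + β • (1 : Matrix (Fin d) (Fin d) ℝ))⁻¹)
    (η : ℝ) (hη : η = ‖Kstar‖) :
    ∀ (ξ : EuclideanSpace ℝ (Fin d)) (K : Matrix (Fin d) (Fin d) ℝ),
      ‖(ξ - δ • (Matrix.toEuclideanCLM (𝕜 := ℝ) K) (g ξ)) - ξstar‖
        ≤ δ * η * γ / 2 * ‖ξ - ξstar‖ ^ 2 + η * q * |1 - δ| * ‖ξ - ξstar‖
          + η * β * ‖ξ - ξstar‖ + δ * l * ‖K - Kstar‖ * ‖ξ - ξstar‖ :=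
  ipg_one_update_error_bound_general F g H hFconv hgrad hHess ξstar hmin γ hHlip q hHq l hglip β hβ
    δ hδ Kstar hKstar η hη
end

section
/- Under the stated MHE setting, if for every ξ = (x₀,…,x_N) ∈ ℝ^{(N+1)n} and every i = 0,…,N−1 the 2n×2n matrix H̿_i(ξ) is positive semidefinite, then the MHE objective F is convex on ℝ^{(N+1)n}. -/
open Matrix

/-- The `i`-th block of length `n` of a vector in `ℝ^{(N+1)n}`. -/
def blk {n N : ℕ} (ξ : Fin (N + 1) × Fin n → ℝ) (i : Fin (N + 1)) : Fin n → ℝ :=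
  fun a => ξ (i, a)

/-- Quadratic form `vᵀ M v`. -/
def quadForm {ι : Type*} [Fintype ι] (M : Matrix ι ι ℝ) (v : ι → ℝ) : ℝ :=
  v ⬝ᵥ M.mulVec v

/-- Jacobian matrix of `x ↦ f x u` at `x`. -/
noncomputable def jacF {n m : ℕ} (f : (Fin n → ℝ) → (Fin m → ℝ) → (Fin n → ℝ))
    (u : Fin m → ℝ) (x : Fin n → ℝ) : Matrix (Fin n) (Fin n) ℝ :=
  Matrix.of fun i j => fderiv ℝ (fun z => f z u i) x (Pi.single j 1)

/-- Jacobian matrix of `h` at `x`. -/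
noncomputable def jacH {n p : ℕ} (h : (Fin n → ℝ) → (Fin p → ℝ)) (x : Fin n → ℝ) :
    Matrix (Fin p) (Fin n) ℝ :=
  Matrix.of fun i j => fderiv ℝ (fun z => h z i) x (Pi.single j 1)

/-- Hessian matrix of a scalar function `φ` at `x`. -/
noncomputable def hessComp {n : ℕ} (φ : (Fin n → ℝ) → ℝ) (x : Fin n → ℝ) :
    Matrix (Fin n) (Fin n) ℝ :=
  Matrix.of fun a b => fderiv ℝ (fun z => fderiv ℝ φ z (Pi.single b 1)) x (Pi.single a 1)

/-- The MHE objective `F`. -/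
noncomputable def mheF {n m p N : ℕ} (f : (Fin n → ℝ) → (Fin m → ℝ) → (Fin n → ℝ))
    (h : (Fin n → ℝ) → (Fin p → ℝ))
    (Q : Matrix (Fin n) (Fin n) ℝ) (R : Matrix (Fin p) (Fin p) ℝ)
    (P : Matrix (Fin n) (Fin n) ℝ)
    (u : Fin N → Fin m → ℝ) (y : Fin N → Fin p → ℝ) (xhat : Fin n → ℝ)
    (ξ : Fin (N + 1) × Fin n → ℝ) : ℝ :=
  (∑ i : Fin N, quadForm Q⁻¹ (blk ξ i.succ - f (blk ξ i.castSucc) (u i)))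
    + (∑ i : Fin N, quadForm R⁻¹ (y i - h (blk ξ i.castSucc)))
    + quadForm P⁻¹ (blk ξ 0 - xhat)

/-- The block `A₁₁^{(i)}`. -/
noncomputable def mheA11 {n m p N : ℕ} (f : (Fin n → ℝ) → (Fin m → ℝ) → (Fin n → ℝ))
    (h : (Fin n → ℝ) → (Fin p → ℝ))
    (Q : Matrix (Fin n) (Fin n) ℝ) (R : Matrix (Fin p) (Fin p) ℝ)
    (P : Matrix (Fin n) (Fin n) ℝ)
    (u : Fin N → Fin m → ℝ) (y : Fin N → Fin p → ℝ)
    (ξ : Fin (N + 1) × Fin n → ℝ) (i : Fin N) : Matrix (Fin n) (Fin n) ℝ :=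
  (jacF f (u i) (blk ξ i.castSucc))ᵀ * Q⁻¹ * jacF f (u i) (blk ξ i.castSucc)
    + (∑ k : Fin n, ((f (blk ξ i.castSucc) (u i) k - blk ξ i.succ k) * Q⁻¹ k k) •
        hessComp (fun z => f z (u i) k) (blk ξ i.castSucc))
    + (jacH h (blk ξ i.castSucc))ᵀ * R⁻¹ * jacH h (blk ξ i.castSucc)
    + (∑ k : Fin p, ((h (blk ξ i.castSucc) k - y i k) * R⁻¹ k k) •
        hessComp (fun z => h z k) (blk ξ i.castSucc))
    + (if (i : ℕ) = 0 then P⁻¹ else 0)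

/-- The `2n × 2n` block matrix `H̿_i(ξ)`. -/
noncomputable def mheHbb {n m p N : ℕ} (f : (Fin n → ℝ) → (Fin m → ℝ) → (Fin n → ℝ))
    (h : (Fin n → ℝ) → (Fin p → ℝ))
    (Q : Matrix (Fin n) (Fin n) ℝ) (R : Matrix (Fin p) (Fin p) ℝ)
    (P : Matrix (Fin n) (Fin n) ℝ)
    (u : Fin N → Fin m → ℝ) (y : Fin N → Fin p → ℝ)
    (ξ : Fin (N + 1) × Fin n → ℝ) (i : Fin N) :
    Matrix (Fin n ⊕ Fin n) (Fin n ⊕ Fin n) ℝ :=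
  Matrix.fromBlocks (mheA11 f h Q R P u y ξ i)
    (-((jacF f (u i) (blk ξ i.castSucc))ᵀ * Q⁻¹))
    (-(Q⁻¹ * jacF f (u i) (blk ξ i.castSucc)))
    Q⁻¹

/-! Along a line `ξ + t • δ`, the `i`-th stage cost (the `i`-th model and measurement residuals,
plus the prior term when `i = 0`) has second derivative
`2 (δᵢ, δᵢ₊₁)ᵀ H̿ᵢ(ξ + t • δ) (δᵢ, δᵢ₊₁)`: the first-order parts of the residuals produce the
Gauss–Newton blocks of `H̿ᵢ`, and, `Q⁻¹` and `R⁻¹` being diagonal, the second-order parts produce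
the Hessian sums in `A₁₁⁽ⁱ⁾`. So every stage cost is convex along every line, and `F` is their
sum. -/

theorem Matrix.IsDiag.inv {ι α : Type*} [Fintype ι] [DecidableEq ι] [CommRing α]
    {A : Matrix ι ι α} (hA : A.IsDiag) : A⁻¹.IsDiag := by
  rw [← hA.diagonal_diag, inv_diagonal]
  exact isDiag_diagonal _

theorem Matrix.IsDiag.dotProduct_mulVec {ι α : Type*} [Fintype ι] [DecidableEq ι]
    [CommSemiring α] {A : Matrix ι ι α} (hA : A.IsDiag) (v w : ι → α) :
    v ⬝ᵥ A *ᵥ w = ∑ k, A k k * v k * w k := by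
  conv_lhs => rw [← hA.diagonal_diag]
  simp only [dotProduct, mulVec_diagonal, diag]
  exact Finset.sum_congr rfl fun k _ => by ring

theorem convexOn_univ_sum {ι E : Type*} [AddCommGroup E] [Module ℝ E] (s : Finset ι)
    {G : ι → E → ℝ} (hG : ∀ i ∈ s, ConvexOn ℝ Set.univ (G i)) :
    ConvexOn ℝ Set.univ (fun x => ∑ i ∈ s, G i x) := by
  classical
  induction s using Finset.induction_on with
  | empty => simpa using convexOn_const (0 : ℝ) convex_univ
  | insert i s hi ih =>
    simp_rw [Finset.sum_insert hi]
    exact (hG i (s.mem_insert_self i)).add (ih fun j hj => hG j (Finset.mem_insert_of_mem hj))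

theorem convexOn_univ_of_forall_line {E : Type*} [AddCommGroup E] [Module ℝ E] {G : E → ℝ}
    (hG : ∀ x d : E, ConvexOn ℝ Set.univ (fun t : ℝ => G (x + t • d))) :
    ConvexOn ℝ Set.univ G := by
  refine ⟨convex_univ, fun x _ y _ a b ha hb hab => ?_⟩
  have := (hG x (y - x)).2 (Set.mem_univ 0) (Set.mem_univ 1) ha hb hab
  have hb' : b = 1 - a := by linarith
  subst hb'
  simp only [smul_eq_mul, mul_zero, mul_one, zero_add, zero_smul, add_zero, one_smul,
    add_sub_cancel] at this ⊢
  convert this using 2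
  module

theorem convexOn_univ_of_hasDerivAt2_nonneg {g g' g'' : ℝ → ℝ}
    (hg : ∀ t, HasDerivAt g (g' t) t) (hg' : ∀ t, HasDerivAt g' (g'' t) t)
    (hg'' : ∀ t, 0 ≤ g'' t) : ConvexOn ℝ Set.univ g := by
  refine convexOn_of_hasDerivWithinAt2_nonneg (f' := g') convex_univ
    (fun t _ => (hg t).continuousAt.continuousWithinAt) ?_ ?_ fun t _ => hg'' t <;>
  simp only [interior_univ, Set.mem_univ, hasDerivWithinAt_univ, forall_const]
  exacts [hg, hg']

theorem quadForm_neg {ι : Type*} [Fintype ι] (M : Matrix ι ι ℝ) (v : ι → ℝ) :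
    quadForm M (-v) = quadForm M v := by
  simp [quadForm, mulVec_neg]

theorem HasDerivAt.dotProduct_mulVec {ι κ : Type*} [Fintype ι] [Fintype κ] (W : Matrix ι κ ℝ)
    {v : ℝ → ι → ℝ} {w : ℝ → κ → ℝ} {v' : ι → ℝ} {w' : κ → ℝ} {t : ℝ}
    (hv : HasDerivAt v v' t) (hw : HasDerivAt w w' t) :
    HasDerivAt (fun s => v s ⬝ᵥ W *ᵥ w s) (v' ⬝ᵥ W *ᵥ w t + v t ⬝ᵥ W *ᵥ w') t := by
  have hWw : HasDerivAt (fun s => W *ᵥ w s) (W *ᵥ w') t := by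
    rw [hasDerivAt_pi] at hw ⊢
    exact fun a => HasDerivAt.fun_sum fun b _ => (hw b).const_mul (W a b)
  rw [hasDerivAt_pi] at hv hWw
  rw [dotProduct, dotProduct, ← Finset.sum_add_distrib]
  exact HasDerivAt.fun_sum fun a _ => (hv a).mul (hWw a)

theorem exists_hasDerivAt2_quadForm_comp {ι : Type*} [Fintype ι] (W : Matrix ι ι ℝ)
    {v v' v'' : ℝ → ι → ℝ} (hv : ∀ s, HasDerivAt v (v' s) s)
    (hv' : ∀ s, HasDerivAt v' (v'' s) s) :
    ∃ g' : ℝ → ℝ, (∀ s, HasDerivAt (fun s => quadForm W (v s)) (g' s) s) ∧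
      ∀ s, HasDerivAt g' (v'' s ⬝ᵥ W *ᵥ v s + 2 * quadForm W (v' s) + v s ⬝ᵥ W *ᵥ v'' s) s :=
  ⟨fun s => v' s ⬝ᵥ W *ᵥ v s + v s ⬝ᵥ W *ᵥ v' s,
    fun s => (hv s).dotProduct_mulVec W (hv s),
    fun s => (((hv' s).dotProduct_mulVec W (hv s)).add
      ((hv s).dotProduct_mulVec W (hv' s))).congr_deriv (by unfold quadForm; ring)⟩

section LineDerivatives

variable {E F : Type*} [NormedAddCommGroup E] [NormedSpace ℝ E]
  [NormedAddCommGroup F] [NormedSpace ℝ F] {φ : E → F}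

theorem hasDerivAt_line (x d : E) (t : ℝ) : HasDerivAt (fun s : ℝ => x + s • d) d t := by
  simpa using ((hasDerivAt_id t).smul_const d).const_add x

theorem hasDerivAt_comp_line (hφ : Differentiable ℝ φ) (x d : E) (t : ℝ) :
    HasDerivAt (fun s : ℝ => φ (x + s • d)) (fderiv ℝ φ (x + t • d) d) t :=
  (hφ _).hasFDerivAt.comp_hasDerivAt t (hasDerivAt_line x d t)

theorem hasDerivAt_fderiv_comp_line (hφ : ContDiff ℝ 2 φ) (x d : E) (t : ℝ) :
    HasDerivAt (fun s : ℝ => fderiv ℝ φ (x + s • d) d)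
      (fderiv ℝ (fderiv ℝ φ) (x + t • d) d d) t := by
  have hφ' : Differentiable ℝ (fderiv ℝ φ) :=
    (hφ.fderiv_right (m := 1) le_rfl).differentiable one_ne_zero
  simpa using (hasDerivAt_comp_line hφ' x d t).clm_apply (hasDerivAt_const t d)

end LineDerivatives

theorem jacH_mulVec {n p : ℕ} (g : (Fin n → ℝ) → Fin p → ℝ) (x d : Fin n → ℝ) :
    jacH g x *ᵥ d = fun k => fderiv ℝ (fun z => g z k) x d := by
  ext k
  conv_rhs => rw [pi_eq_sum_univ' d]
  simp [jacH, mulVec, dotProduct, mul_comm]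

theorem quadForm_hessComp {n : ℕ} {φ : (Fin n → ℝ) → ℝ} (hφ : ContDiff ℝ 2 φ)
    (x d : Fin n → ℝ) : quadForm (hessComp φ x) d = fderiv ℝ (fderiv ℝ φ) x d d := by
  have hφ' : Differentiable ℝ (fderiv ℝ φ) :=
    (hφ.fderiv_right (m := 1) le_rfl).differentiable one_ne_zero
  have hess : ∀ a b, hessComp φ x a b
      = fderiv ℝ (fderiv ℝ φ) x (Pi.single a 1) (Pi.single b 1) := fun a b => by
    simp [hessComp, fderiv_clm_apply (hφ' x) (differentiableAt_const _)]
  conv_rhs => rw [pi_eq_sum_univ' d]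
  simp only [quadForm, hess, mulVec, dotProduct, map_sum, map_smul,
    FunLike.coe_sum, FunLike.coe_smul, Finset.sum_apply, Pi.smul_apply,
    smul_eq_mul, Finset.mul_sum]
  rw [Finset.sum_comm]
  exact Finset.sum_congr rfl fun _ _ => Finset.sum_congr rfl fun _ _ => by ring

theorem hasDerivAt_comp_line_jacH {n p : ℕ} {g : (Fin n → ℝ) → Fin p → ℝ}
    (hg : Differentiable ℝ g) (x d : Fin n → ℝ) (t : ℝ) :
    HasDerivAt (fun s : ℝ => g (x + s • d)) (jacH g (x + t • d) *ᵥ d) t := by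
  rw [hasDerivAt_pi, jacH_mulVec]
  exact fun k => hasDerivAt_comp_line (differentiable_pi.1 hg k) x d t

theorem hasDerivAt_jacH_mulVec_comp_line {n p : ℕ} {g : (Fin n → ℝ) → Fin p → ℝ}
    (hg : ContDiff ℝ 2 g) (x d : Fin n → ℝ) (t : ℝ) :
    HasDerivAt (fun s : ℝ => jacH g (x + s • d) *ᵥ d)
      (fun k => quadForm (hessComp (fun z => g z k) (x + t • d)) d) t := by
  simp_rw [jacH_mulVec, hasDerivAt_pi]
  intro k
  rw [quadForm_hessComp (contDiff_pi.1 hg k)]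
  exact hasDerivAt_fderiv_comp_line (contDiff_pi.1 hg k) x d t

theorem exists_hasDerivAt2_quadForm_residual {n p : ℕ} {W : Matrix (Fin p) (Fin p) ℝ}
    (hW : W.IsDiag) {g : (Fin n → ℝ) → Fin p → ℝ} (hg : ContDiff ℝ 2 g) (c e : Fin p → ℝ)
    (x d : Fin n → ℝ) :
    ∃ g' : ℝ → ℝ,
      (∀ t, HasDerivAt (fun t => quadForm W (c + t • e - g (x + t • d))) (g' t) t) ∧
      ∀ t, HasDerivAt g' (2 * (quadForm W (e - jacH g (x + t • d) *ᵥ d)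
        + ∑ k, (g (x + t • d) k - (c + t • e) k) * W k k *
            quadForm (hessComp (fun z => g z k) (x + t • d)) d)) t := by
  obtain ⟨g', hg', hg''⟩ := exists_hasDerivAt2_quadForm_comp W
    (v := fun t => c + t • e - g (x + t • d)) (v' := fun t => e - jacH g (x + t • d) *ᵥ d)
    (v'' := fun t => -fun k => quadForm (hessComp (fun z => g z k) (x + t • d)) d)
    (fun t => (hasDerivAt_line c e t).sub
      (hasDerivAt_comp_line_jacH (hg.differentiable two_ne_zero) x d t))
    (fun t => ((hasDerivAt_const t e).sub
      (hasDerivAt_jacH_mulVec_comp_line hg x d t)).congr_deriv (zero_sub _))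
  refine ⟨g', hg', fun t => (hg'' t).congr_deriv ?_⟩
  rw [hW.dotProduct_mulVec, hW.dotProduct_mulVec, mul_add, Finset.mul_sum, add_right_comm,
    ← Finset.sum_add_distrib, add_comm]
  congr 1
  exact Finset.sum_congr rfl fun k _ => by simp only [Pi.neg_apply, Pi.sub_apply]; ring

theorem blk_add_smul {n N : ℕ} (ξ δ : Fin (N + 1) × Fin n → ℝ) (t : ℝ) (j : Fin (N + 1)) :
    blk (ξ + t • δ) j = blk ξ j + t • blk δ j :=
  rfl

section MHE

variable {n m p N : ℕ} (f : (Fin n → ℝ) → (Fin m → ℝ) → (Fin n → ℝ))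
  (h : (Fin n → ℝ) → (Fin p → ℝ))
  (Q : Matrix (Fin n) (Fin n) ℝ) (R : Matrix (Fin p) (Fin p) ℝ) (P : Matrix (Fin n) (Fin n) ℝ)
  (u : Fin N → Fin m → ℝ) (y : Fin N → Fin p → ℝ)

theorem quadForm_mheHbb (ξ : Fin (N + 1) × Fin n → ℝ) (i : Fin N) (a b : Fin n → ℝ) :
    quadForm (mheHbb f h Q R P u y ξ i) (Sum.elim a b) =
      quadForm Q⁻¹ (b - jacF f (u i) (blk ξ i.castSucc) *ᵥ a)
      + ∑ k, (f (blk ξ i.castSucc) (u i) k - blk ξ i.succ k) * Q⁻¹ k k *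
          quadForm (hessComp (fun z => f z (u i) k) (blk ξ i.castSucc)) a
      + quadForm R⁻¹ (jacH h (blk ξ i.castSucc) *ᵥ a)
      + ∑ k, (h (blk ξ i.castSucc) k - y i k) * R⁻¹ k k *
          quadForm (hessComp (fun z => h z k) (blk ξ i.castSucc)) a
      + quadForm (if (i : ℕ) = 0 then P⁻¹ else 0) a := by
  simp only [quadForm, mheHbb, mheA11, fromBlocks_mulVec, Sum.elim_comp_inl, Sum.elim_comp_inr,
    sumElim_dotProduct_sumElim, add_mulVec, sum_mulVec, smul_mulVec, dotProduct_add,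
    dotProduct_sum, dotProduct_smul, smul_eq_mul, neg_mulVec, dotProduct_neg, Matrix.mul_assoc,
    ← mulVec_mulVec, dotProduct_transpose_mulVec, mulVec_sub, sub_dotProduct, dotProduct_sub]
  rw [dotProduct_comm (Q⁻¹ *ᵥ _), dotProduct_comm (Q⁻¹ *ᵥ b), dotProduct_comm (R⁻¹ *ᵥ _)]
  ring

noncomputable def mheStageCost (xhat : Fin n → ℝ) (i : Fin N) (ξ : Fin (N + 1) × Fin n → ℝ) :
    ℝ :=
  quadForm Q⁻¹ (blk ξ i.succ - f (blk ξ i.castSucc) (u i))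
    + quadForm R⁻¹ (y i - h (blk ξ i.castSucc))
    + quadForm (if (i : ℕ) = 0 then P⁻¹ else 0) (blk ξ i.castSucc - xhat)

theorem mheF_eq_sum_mheStageCost (xhat : Fin n → ℝ) (hN : 1 ≤ N) :
    mheF f h Q R P u y xhat = fun ξ => ∑ i, mheStageCost f h Q R P u y xhat i ξ := by
  funext ξ
  have hprior : ∑ i : Fin N, quadForm (if (i : ℕ) = 0 then P⁻¹ else 0) (blk ξ i.castSucc - xhat)
      = quadForm P⁻¹ (blk ξ 0 - xhat) := by
    rw [Finset.sum_eq_single_of_mem ⟨0, hN⟩ (Finset.mem_univ _)]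
    · rfl
    · intro i _ hi
      rw [if_neg fun h0 => hi (Fin.ext h0)]
      simp [quadForm]
  simp only [mheF, mheStageCost, Finset.sum_add_distrib, hprior]

theorem convexOn_mheStageCost (xhat : Fin n → ℝ) (i : Fin N)
    (hfi : ContDiff ℝ 2 fun x => f x (u i)) (hh : ContDiff ℝ 2 h)
    (hQ : Q⁻¹.IsDiag) (hR : R⁻¹.IsDiag)
    (hpsd : ∀ ξ, (mheHbb f h Q R P u y ξ i).PosSemidef) :
    ConvexOn ℝ Set.univ (mheStageCost f h Q R P u y xhat i) := by
  refine convexOn_univ_of_forall_line fun ξ δ => ?_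
  simp only [mheStageCost, blk_add_smul]
  obtain ⟨gQ, hgQ, hgQ'⟩ :=
    exists_hasDerivAt2_quadForm_residual hQ hfi (blk ξ i.succ) (blk δ i.succ) (blk ξ i.castSucc)
      (blk δ i.castSucc)
  obtain ⟨gR, hgR, hgR'⟩ :=
    exists_hasDerivAt2_quadForm_residual hR hh (y i) 0 (blk ξ i.castSucc) (blk δ i.castSucc)
  obtain ⟨gP, hgP, hgP'⟩ := exists_hasDerivAt2_quadForm_comp (if (i : ℕ) = 0 then P⁻¹ else 0)
    (fun t => (hasDerivAt_line (blk ξ i.castSucc) (blk δ i.castSucc) t).sub_const xhat)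
    (fun t => hasDerivAt_const t (blk δ i.castSucc))
  simp only [smul_zero, add_zero, zero_sub, quadForm_neg] at hgR hgR'
  simp only [zero_dotProduct, mulVec_zero, dotProduct_zero, zero_add, add_zero] at hgP'
  refine convexOn_univ_of_hasDerivAt2_nonneg (fun t => ((hgQ t).add (hgR t)).add (hgP t))
    (fun t => ((hgQ' t).add (hgR' t)).add (hgP' t)) fun t => ?_
  have hH := (hpsd (ξ + t • δ)).dotProduct_mulVec_nonneg
    (Sum.elim (blk δ i.castSucc) (blk δ i.succ))
  rw [star_trivial] at hH
  change 0 ≤ quadForm _ _ at hH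
  rw [quadForm_mheHbb] at hH
  simp only [blk_add_smul] at hH
  -- `jacF f (u i)` is `jacH (f · (u i))` by definition
  change 0 ≤ 2 * (quadForm Q⁻¹ (_ - jacF f (u i) _ *ᵥ _) + _) + _ + _
  linarith

end MHE

theorem mhe_convex_of_blocks_posSemidef_general
    (n m p N : ℕ) (hN : 1 ≤ N)
    (f : (Fin n → ℝ) → (Fin m → ℝ) → (Fin n → ℝ))
    (hf : ContDiff ℝ 2 (fun q : (Fin n → ℝ) × (Fin m → ℝ) => f q.1 q.2))
    (h : (Fin n → ℝ) → (Fin p → ℝ)) (hh : ContDiff ℝ 2 h)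
    (Q : Matrix (Fin n) (Fin n) ℝ) (hQdiag : Q.IsDiag)
    (R : Matrix (Fin p) (Fin p) ℝ) (hRdiag : R.IsDiag)
    (P : Matrix (Fin n) (Fin n) ℝ)
    (u : Fin N → Fin m → ℝ) (y : Fin N → Fin p → ℝ) (xhat : Fin n → ℝ)
    (hpsd : ∀ (ξ : Fin (N + 1) × Fin n → ℝ) (i : Fin N),
      (mheHbb f h Q R P u y ξ i).PosSemidef) :
    ConvexOn ℝ Set.univ (mheF f h Q R P u y xhat) := by
  rw [mheF_eq_sum_mheStageCost f h Q R P u y xhat hN]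
  exact convexOn_univ_sum _ fun i _ => convexOn_mheStageCost f h Q R P u y xhat i
    (hf.comp (contDiff_id.prodMk contDiff_const)) hh hQdiag.inv hRdiag.inv fun ξ => hpsd ξ i

theorem mhe_convex_of_blocks_posSemidef
    (n m p N : ℕ) (hn : 1 ≤ n) (hm : 1 ≤ m) (hp : 1 ≤ p) (hN : 1 ≤ N)
    (f : (Fin n → ℝ) → (Fin m → ℝ) → (Fin n → ℝ))
    (hf : ContDiff ℝ 2 (fun q : (Fin n → ℝ) × (Fin m → ℝ) => f q.1 q.2))
    (h : (Fin n → ℝ) → (Fin p → ℝ)) (hh : ContDiff ℝ 2 h)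
    (Q : Matrix (Fin n) (Fin n) ℝ) (hQdiag : Q.IsDiag) (hQpd : Q.PosDef)
    (R : Matrix (Fin p) (Fin p) ℝ) (hRdiag : R.IsDiag) (hRpd : R.PosDef)
    (P : Matrix (Fin n) (Fin n) ℝ) (hP : P.PosDef)
    (u : Fin N → Fin m → ℝ) (y : Fin N → Fin p → ℝ) (xhat : Fin n → ℝ)
    (hpsd : ∀ (ξ : Fin (N + 1) × Fin n → ℝ) (i : Fin N),
      (mheHbb f h Q R P u y ξ i).PosSemidef) :
    ConvexOn ℝ Set.univ (mheF f h Q R P u y xhat) :=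
  mhe_convex_of_blocks_posSemidef_general n m p N hN f hf h hh Q hQdiag R hRdiag P u y xhat hpsd
end
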